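/- arXiv:1610.04972 — 6 statements merged into one kernel-verified Lean document; each statement's English description precedes it below -/
import Mathlib

section
/- If (α, β) is a Nash equilibrium of the classification game with P_N(v) > 0 for all v, then there is no v with α_v = 0 and π_d^β(v) > 0; i.e., every attack vector that receives positive detection probability is used by the attacker with positive probability. -/
open Finset

/-- A probability distribution on a finite type. -/
def IsProb {X : Type*} [Fintype X] (μ : X → ℝ) : Prop :=
  (∀ x, 0 ≤ μ x) ∧ ∑ x, μ x = 1

/-- Probability of detection of attack vector `v` under defender mixed strategy `β`. -/
noncomputable def pid {V C : Type*} [Fintype C] (cl : C → V → Bool)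
    (β : C → ℝ) (v : V) : ℝ :=
  ∑ c, if cl c v then β c else 0

/-- Attacker's expected payoff: U^A(v,c) = R(v) − c_d·1[c(v)=1], bilinearly extended. -/
noncomputable def UA {V C : Type*} [Fintype V] [Fintype C] (cl : C → V → Bool)
    (R : V → ℝ) (cd : ℝ) (α : V → ℝ) (β : C → ℝ) : ℝ :=
  ∑ v, ∑ c, α v * (R v - cd * (if cl c v then 1 else 0)) * β c

/-- Defender's expected payoff:
U^D(v,c) = −U^A(v,c) − ((1−p)/p)·c_fa·Σ_{v'} P_N(v')·1[c(v')=1]. -/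
noncomputable def UD {V C : Type*} [Fintype V] [Fintype C] (cl : C → V → Bool)
    (R : V → ℝ) (PN : V → ℝ) (cd cfa p : ℝ) (α : V → ℝ) (β : C → ℝ) : ℝ :=
  ∑ v, ∑ c, α v *
    (-(R v - cd * (if cl c v then 1 else 0))
      - (1 - p) / p * cfa * ∑ v', PN v' * (if cl c v' then 1 else 0)) * β c

/-- Nash equilibrium of the classification game. -/
def IsNash {V C : Type*} [Fintype V] [Fintype C] (cl : C → V → Bool) (R : V → ℝ)
    (PN : V → ℝ) (cd cfa p : ℝ) (α : V → ℝ) (β : C → ℝ) : Prop :=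
  IsProb α ∧ IsProb β ∧
  (∀ α', IsProb α' → UA cl R cd α' β ≤ UA cl R cd α β) ∧
  (∀ β', IsProb β' → UD cl R PN cd cfa p α β' ≤ UD cl R PN cd cfa p α β)

section Pushforward

variable {X Y : Type*} [Fintype X] [Fintype Y] [DecidableEq Y]

noncomputable def pushforward (f : X → Y) (μ : X → ℝ) (y : Y) : ℝ :=
  ∑ x with f x = y, μ x

theorem sum_pushforward_mul (f : X → Y) (μ : X → ℝ) (H : Y → ℝ) :
    ∑ y, pushforward f μ y * H y = ∑ x, μ x * H (f x) := by
  simp_rw [pushforward, sum_mul]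
  rw [← sum_fiberwise univ f (fun x => μ x * H (f x))]
  exact sum_congr rfl fun y _ => sum_congr rfl fun x hx => by rw [(mem_filter.1 hx).2]

theorem IsProb.pushforward {μ : X → ℝ} (hμ : IsProb μ) (f : X → Y) :
    IsProb (pushforward f μ) :=
  ⟨fun _ => sum_nonneg fun x _ => hμ.1 x, by simpa [hμ.2] using sum_pushforward_mul f μ 1⟩

end Pushforward

section DefenderPayoff

variable {V C : Type*} [Fintype V] [Fintype C]

noncomputable def defenderPayoff (cl : C → V → Bool) (R PN : V → ℝ) (cd cfa p : ℝ)
    (α : V → ℝ) (c : C) : ℝ :=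
  ∑ u, α u * (-(R u - cd * (if cl c u then 1 else 0))
    - (1 - p) / p * cfa * ∑ v', PN v' * (if cl c v' then 1 else 0))

theorem UD_eq_sum_mul_defenderPayoff (cl : C → V → Bool) (R PN : V → ℝ) (cd cfa p : ℝ)
    (α : V → ℝ) (β : C → ℝ) :
    UD cl R PN cd cfa p α β = ∑ c, β c * defenderPayoff cl R PN cd cfa p α c := by
  unfold UD defenderPayoff
  rw [sum_comm]
  simp_rw [mul_sum]
  exact sum_congr rfl fun c _ => sum_congr rfl fun u _ => by ring

end DefenderPayoff

section Unflag

variable {V : Type*} [Fintype V] [DecidableEq V]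

theorem sum_mul_indicator_update_false (PN : V → ℝ) (c : V → Bool) (v : V) :
    ∑ w, PN w * (if Function.update c v false w then 1 else 0)
      = ∑ w, PN w * (if c w then 1 else 0) - PN v * (if c v then 1 else 0) := by
  rw [← add_sum_erase _ _ (mem_univ v), ← add_sum_erase _ _ (mem_univ v)]
  have hrest : ∀ w ∈ univ.erase v,
      PN w * (if Function.update c v false w then 1 else 0) = PN w * (if c w then 1 else 0) :=
    fun w hw => by rw [Function.update_of_ne (ne_of_mem_erase hw)]
  rw [sum_congr rfl hrest]
  simp

theorem defenderPayoff_update_false (R PN : V → ℝ) (cd cfa p : ℝ) {α : V → ℝ} {v : V}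
    (hα : α v = 0) (c : V → Bool) :
    defenderPayoff (fun c v => c v) R PN cd cfa p α (Function.update c v false)
      = defenderPayoff (fun c v => c v) R PN cd cfa p α c
        + (∑ u, α u) * ((1 - p) / p * cfa * PN v) * (if c v then 1 else 0) := by
  unfold defenderPayoff
  beta_reduce
  rw [sum_mul, sum_mul, ← sum_add_distrib]
  refine sum_congr rfl fun u _ => ?_
  rw [sum_mul_indicator_update_false]
  by_cases hu : u = v
  · subst hu
    simp [hα]
  · rw [Function.update_of_ne hu]
    ring

/-- The profitable deviation: no longer flagging the unused vector `v` costs nothing against `α`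
and saves the false-alarm cost of `v` on every classifier that flagged it. -/
theorem UD_pushforward_update_false (R PN : V → ℝ) (cd cfa p : ℝ) {α : V → ℝ} {v : V}
    (hα : α v = 0) (β : (V → Bool) → ℝ) :
    UD (fun c v => c v) R PN cd cfa p α (pushforward (Function.update · v false) β)
      = UD (fun c v => c v) R PN cd cfa p α β
        + (∑ u, α u) * ((1 - p) / p * cfa * PN v) * pid (fun c v => c v) β v := by
  rw [UD_eq_sum_mul_defenderPayoff, UD_eq_sum_mul_defenderPayoff, sum_pushforward_mul, pid,
    mul_sum, ← sum_add_distrib]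
  refine sum_congr rfl fun c _ => ?_
  rw [defenderPayoff_update_false R PN cd cfa p hα]
  split_ifs <;> ring

end Unflag

theorem no_detection_on_unused_vectors_general
    {V : Type*} [Fintype V] [DecidableEq V]
    (R : V → ℝ) (PN : V → ℝ) (cd cfa p : ℝ)
    (hcfa : 0 < cfa) (hp : 0 < p) (hp1 : p < 1)
    (hPN : ∀ v, 0 < PN v)
    (α : V → ℝ) (β : (V → Bool) → ℝ)
    (hne : IsNash (fun c v => c v) R PN cd cfa p α β) :
    ¬ ∃ v, α v = 0 ∧ 0 < pid (fun c v => c v) β v := by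
  rintro ⟨v, hαv, hdetected⟩
  obtain ⟨⟨-, hα⟩, hβ, -, hβ_best⟩ := hne
  have hsaving : 0 < (1 - p) / p * cfa * PN v := by
    have := hPN v
    have : 0 < 1 - p := by linarith
    positivity
  have hdeviation := hβ_best _ (hβ.pushforward (Function.update · v false))
  rw [UD_pushforward_update_false R PN cd cfa p hαv, hα] at hdeviation
  linarith [mul_pos hsaving hdetected]

/-- at a Nash equilibrium (full classifier space, full-support non-attacker),
no attack vector unused by the attacker receives positive detection probability. -/
theorem no_detection_on_unused_vectors
    {V : Type*} [Fintype V] [DecidableEq V]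
    (R : V → ℝ) (PN : V → ℝ) (cd cfa p : ℝ)
    (hR : ∀ v, 0 ≤ R v) (hcd : 0 < cd) (hcfa : 0 < cfa) (hp : 0 < p) (hp1 : p < 1)
    (hPN : ∀ v, 0 < PN v) (hPN1 : ∑ v, PN v = 1)
    (α : V → ℝ) (β : (V → Bool) → ℝ)
    (hne : IsNash (fun c v => c v) R PN cd cfa p α β) :
    ¬ ∃ v, α v = 0 ∧ 0 < pid (fun c v => c v) β v :=
  no_detection_on_unused_vectors_general R PN cd cfa p hcfa hp hp1 hPN α β hne
end

section
/- In any Nash equilibrium (α, β) of the classification game, if v ∈ V satisfies 0 < π_d^β(v) < 1, then α_v = ((1−p)/p)·(c_fa/c_d)·P_N(v). That is, on attack vectors with nontrivial detection probability, the attacker's equilibrium distribution is a fixed scalar multiple of the non-attacker's distribution. -/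
open Finset

/-! The defender's payoff is linear in its mixed strategy, so every classifier played at an
equilibrium is a best pure response. Flipping the verdict of such a classifier on `v` alone
changes the defender's payoff by `c_d α_v − ((1−p)/p) c_fa P_N(v)`. Since `0 < π_d^β(v) < 1`,
some classifier in the support flags `v` and another one does not, so this change is both
`≥ 0` and `≤ 0`. -/

section BestResponse

variable {C : Type*} [Fintype C]

theorem IsProb.sum_mul_lt {W β : C → ℝ} (hβ : IsProb β) {M : ℝ} (hW : ∀ c, W c ≤ M)
    {c₀ : C} (hc₀ : 0 < β c₀) (hlt : W c₀ < M) : ∑ c, W c * β c < M :=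
  calc ∑ c, W c * β c < ∑ c, M * β c :=
        sum_lt_sum (fun c _ => by gcongr; exacts [hβ.1 c, hW c])
          ⟨c₀, mem_univ _, mul_lt_mul_of_pos_right hlt hc₀⟩
    _ = M := by rw [← mul_sum, hβ.2, mul_one]

theorem isProb_pi_single [DecidableEq C] (c : C) : IsProb (Pi.single c 1 : C → ℝ) :=
  ⟨fun x => by rw [Pi.single_apply]; split_ifs <;> norm_num, by simp⟩

theorem IsProb.le_of_pos_of_forall_sum_mul_le {W β : C → ℝ} (hβ : IsProb β)
    (hopt : ∀ β', IsProb β' → ∑ c, W c * β' c ≤ ∑ c, W c * β c)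
    {c : C} (hc : 0 < β c) (c' : C) : W c' ≤ W c := by
  classical
  obtain ⟨m, -, hm⟩ := exists_max_image univ W ⟨c, mem_univ c⟩
  have hm' : ∀ x, W x ≤ W m := fun x => hm x (mem_univ x)
  have hpure : W m ≤ ∑ x, W x * β x := by
    simpa [Pi.single_apply] using hopt _ (isProb_pi_single m)
  by_contra! hlt
  linarith [hβ.sum_mul_lt hm' hc (hlt.trans_le (hm' c'))]

end BestResponse

section DefenderPayoff

variable {V C : Type*} [Fintype V]

noncomputable def pureUD (cl : C → V → Bool) (R PN : V → ℝ) (cd cfa p : ℝ) (α : V → ℝ)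
    (c : C) : ℝ :=
  ∑ v, α v *
    (-(R v - cd * (if cl c v then 1 else 0))
      - (1 - p) / p * cfa * ∑ v', PN v' * (if cl c v' then 1 else 0))

theorem UD_eq_sum_pureUD [Fintype C] (cl : C → V → Bool) (R PN : V → ℝ) (cd cfa p : ℝ)
    (α : V → ℝ) (β : C → ℝ) : UD cl R PN cd cfa p α β = ∑ c, pureUD cl R PN cd cfa p α c * β c := by
  rw [UD, sum_comm]
  simp only [pureUD, sum_mul]

theorem pureUD_eq (cl : C → V → Bool) (R PN : V → ℝ) (cd cfa p : ℝ) (α : V → ℝ) (c : C) :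
    pureUD cl R PN cd cfa p α c =
      ∑ v, α v * (cd * (if cl c v then 1 else 0) - R v)
        - (1 - p) / p * cfa * (∑ v, PN v * (if cl c v then 1 else 0)) * ∑ v, α v := by
  rw [pureUD, mul_comm _ (∑ v, α v), sum_mul, ← sum_sub_distrib]
  exact sum_congr rfl fun v _ => by ring

theorem sum_mul_ite_update_sub [DecidableEq V] (f : V → ℝ) (c : V → Bool) (v : V) :
    ∑ w, f w * (if Function.update c v true w then 1 else 0)
      - ∑ w, f w * (if Function.update c v false w then 1 else 0) = f v := by
  rw [← sum_sub_distrib, ← Fintype.sum_ite_eq' v f]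
  refine sum_congr rfl fun w _ => ?_
  by_cases hw : w = v
  · subst hw; simp
  · simp [hw]

theorem pureUD_update_true_sub_false [DecidableEq V]
    (R PN : V → ℝ) (cd cfa p : ℝ) {α : V → ℝ} (hα : ∑ v, α v = 1) (c : V → Bool) (v : V) :
    pureUD (fun c v => c v) R PN cd cfa p α (Function.update c v true)
      - pureUD (fun c v => c v) R PN cd cfa p α (Function.update c v false)
      = cd * α v - (1 - p) / p * cfa * PN v := by
  have hα_ind := sum_mul_ite_update_sub α c v
  have hPN_ind := sum_mul_ite_update_sub PN c v
  simp only [pureUD_eq, hα, mul_one]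
  simp only [mul_sub, sum_sub_distrib, mul_left_comm _ cd, ← mul_sum]
  linear_combination cd * hα_ind - (1 - p) / p * cfa * hPN_ind

end DefenderPayoff

section Detection

variable {V C : Type*} [Fintype C] {cl : C → V → Bool} {β : C → ℝ} {v : V}

theorem exists_pos_of_pid_pos (h : 0 < pid cl β v) : ∃ c, cl c v ∧ 0 < β c := by
  by_contra! hβ
  refine h.not_ge (sum_nonpos fun c _ => ?_)
  split_ifs with hcv
  exacts [hβ c hcv, le_rfl]

theorem IsProb.exists_pos_of_pid_lt_one (hβ : IsProb β) (h : pid cl β v < 1) :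
    ∃ c, cl c v = false ∧ 0 < β c := by
  have hcompl : 1 - pid cl β v = ∑ c, if cl c v then 0 else β c := by
    rw [← hβ.2, pid, ← sum_sub_distrib]
    exact sum_congr rfl fun c _ => by split_ifs <;> ring
  by_contra! hβ₀
  refine (sub_pos.2 h).not_ge (hcompl ▸ sum_nonpos fun c _ => ?_)
  split_ifs with hcv
  exacts [le_rfl, hβ₀ c (by simpa using hcv)]

end Detection

theorem attacker_mimics_nonattacker_general
    {V : Type*} [Fintype V] [DecidableEq V]
    (R : V → ℝ) (PN : V → ℝ) (cd cfa p : ℝ)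
    (hcd : 0 < cd)
    (α : V → ℝ) (β : (V → Bool) → ℝ)
    (hne : IsNash (fun c v => c v) R PN cd cfa p α β)
    (v : V) (hlow : 0 < pid (fun c v => c v) β v) (hhigh : pid (fun c v => c v) β v < 1) :
    α v = (1 - p) / p * (cfa / cd) * PN v := by
  obtain ⟨hα, hβ, -, hD⟩ := hne
  set W : (V → Bool) → ℝ := pureUD (fun c v => c v) R PN cd cfa p α
  have hbest : ∀ c, 0 < β c → ∀ c', W c' ≤ W c := fun c hc =>
    hβ.le_of_pos_of_forall_sum_mul_le
      (fun β' hβ' => by simpa only [UD_eq_sum_pureUD] using hD β' hβ') hc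
  have hflip := pureUD_update_true_sub_false R PN cd cfa p hα.2
  obtain ⟨c₁, hc₁v, hc₁⟩ := exists_pos_of_pid_pos hlow
  obtain ⟨c₀, hc₀v, hc₀⟩ := hβ.exists_pos_of_pid_lt_one hhigh
  have hge : 0 ≤ cd * α v - (1 - p) / p * cfa * PN v := by
    have := hbest c₁ hc₁ (Function.update c₁ v false)
    have hc₁_eq : Function.update c₁ v true = c₁ := by rw [← hc₁v, Function.update_eq_self]
    linarith [hflip c₁ v, congrArg W hc₁_eq]
  have hle : cd * α v - (1 - p) / p * cfa * PN v ≤ 0 := by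
    have := hbest c₀ hc₀ (Function.update c₀ v true)
    have hc₀_eq : Function.update c₀ v false = c₀ := by rw [← hc₀v, Function.update_eq_self]
    linarith [hflip c₀ v, congrArg W hc₀_eq]
  have hkey : cd * α v = (1 - p) / p * cfa * PN v := by linarith
  rw [← mul_div_cancel_left₀ (α v) hcd.ne', hkey]
  ring

/-- at a Nash equilibrium of the classification game (full classifier
space), on attack vectors with detection probability strictly between 0 and 1,
the attacker's equilibrium distribution is a scaled copy of the non-attacker's:
α_v = ((1−p)/p)·(c_fa/c_d)·P_N(v). -/
theorem attacker_mimics_nonattacker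
    {V : Type*} [Fintype V] [DecidableEq V]
    (R : V → ℝ) (PN : V → ℝ) (cd cfa p : ℝ)
    (hR : ∀ v, 0 ≤ R v) (hcd : 0 < cd) (hcfa : 0 < cfa) (hp : 0 < p) (hp1 : p < 1)
    (hPN1 : ∑ v, PN v = 1) (hPN0 : ∀ v, 0 ≤ PN v)
    (α : V → ℝ) (β : (V → Bool) → ℝ)
    (hne : IsNash (fun c v => c v) R PN cd cfa p α β)
    (v : V) (hlow : 0 < pid (fun c v => c v) β v) (hhigh : pid (fun c v => c v) β v < 1) :
    α v = (1 - p) / p * (cfa / cd) * PN v :=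
  attacker_mimics_nonattacker_general R PN cd cfa p hcd α β hne v hlow hhigh
end

section
/- With the defender's LP polyhedron P = {x : Λx ≥ 1, x ≥ 0} for the reduced classification game, any extreme point x of P corresponding to an equilibrium strategy satisfies: there is an index s such that x_i = 0 for i < s, x_i = ((r_i − r_{i−1})/c_d)·‖x‖ > 0 for s+1 ≤ i ≤ m, and not both x_s > 0 and x_{m+1} > 0. -/
open Finset

/-- The defender's LP objective: min_i (Λβ)_i − μ'β. -/
noncomputable def lpObj (n : ℕ) (Λ : Fin (n+1) → Fin (n+2) → ℝ)
    (μ : Fin (n+2) → ℝ) (β : Fin (n+2) → ℝ) : ℝ :=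
  (Finset.univ.inf' Finset.univ_nonempty fun i : Fin (n+1) => ∑ j, Λ i j * β j)
    - ∑ j, μ j * β j

/-- Membership in the polyhedron P = {x : Λx ≥ 1, x ≥ 0}. -/
def InPoly (n : ℕ) (Λ : Fin (n+1) → Fin (n+2) → ℝ) (x : Fin (n+2) → ℝ) : Prop :=
  (∀ j, 0 ≤ x j) ∧ ∀ i, 1 ≤ ∑ j, Λ i j * x j

/-- `x` corresponds (via normalization β = x/‖x‖₁) to a defender Nash equilibrium
strategy, i.e. β maximizes min_i(Λβ)_i − μ'β over the simplex. -/
def CorrespondsToEq (n : ℕ) (Λ : Fin (n+1) → Fin (n+2) → ℝ)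
    (μ : Fin (n+2) → ℝ) (x : Fin (n+2) → ℝ) : Prop :=
  0 < ∑ j, x j ∧
  ∀ β : Fin (n+2) → ℝ, (∀ j, 0 ≤ β j) → (∑ j, β j = 1) →
    lpObj n Λ μ β ≤ lpObj n Λ μ (fun j => x j / ∑ j', x j')

/-- `x` is an extreme point of the polyhedron P: it lies in P and is not the
midpoint of two distinct points of P. -/
def ExtremePt (n : ℕ) (Λ : Fin (n+1) → Fin (n+2) → ℝ) (x : Fin (n+2) → ℝ) : Prop :=
  InPoly n Λ x ∧
  ¬ ∃ y z : Fin (n+2) → ℝ, InPoly n Λ y ∧ InPoly n Λ z ∧ y ≠ z ∧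
      x = fun j => (y j + z j) / 2

/-!
Moving mass of an optimal strategy from column `j` to column `j + 1` changes only row `j` of
`Λ β` and strictly lowers `μ ⬝ᵥ β`; hence every column `j ≤ n` in the support of `x` indexes a
minimal row of `Λ x`. Since `(Λ x)_{k+1} - (Λ x)_k = c_d x_{k+1} - (r_{k+1} - r_k) ‖x‖`, a
minimal row `k` forces `x_{k+1} > 0`, so minimality spreads from the first support index `t` up
to `n`, and equality of consecutive minimal rows is the formula for `x_{k+1}`. If also
`x_{n+1} > 0`, then `c_d x - (Λ x)_t (e_t - e_{n+1})` vanishes off the support of `x` and on all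
rows `≥ t`, and it is nonzero; extremality rules out such a direction unless row `t - 1` is
tight, and then `s = t - 1` works.
-/

open Matrix Filter Topology

theorem eventually_le_add_mul {a b c : ℝ} (hab : a ≤ b) (hc : b = a → c = 0) :
    ∀ᶠ η in 𝓝 (0 : ℝ), a ≤ b + η * c := by
  rcases hab.lt_or_eq with hab | rfl
  · have : Tendsto (fun η : ℝ => b + η * c) (𝓝 0) (𝓝 b) := by
      simpa using ((tendsto_id (x := 𝓝 (0 : ℝ))).mul_const c).const_add b
    exact (this.eventually (eventually_gt_nhds hab)).mono fun _ => le_of_lt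
  · simp [hc rfl]

theorem exists_pos_forall_lt_eq_zero {m : ℕ} {x : Fin m → ℝ} (hx : ∀ j, 0 ≤ x j)
    (hS : 0 < ∑ j, x j) : ∃ t, 0 < x t ∧ ∀ j : Fin m, (j : ℕ) < t → x j = 0 := by
  obtain ⟨j, -, hj⟩ := exists_ne_zero_of_sum_ne_zero hS.ne'
  obtain ⟨t, ht, hmin⟩ := wellFounded_lt.has_min {j | 0 < x j} ⟨j, (hx j).lt_of_ne' hj⟩
  exact ⟨t, ht, fun k hk => by_contra fun h => hmin k ((hx k).lt_of_ne' h) hk⟩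

section Polyhedron

variable {n : ℕ} {Λ : Matrix (Fin (n+1)) (Fin (n+2)) ℝ} {x d : Fin (n+2) → ℝ}

theorem inPoly_iff : InPoly n Λ x ↔ (∀ j, 0 ≤ x j) ∧ ∀ i, 1 ≤ (Λ *ᵥ x) i := Iff.rfl

theorem InPoly.eventually_add_smul (hx : InPoly n Λ x) (hsupp : ∀ j, x j = 0 → d j = 0)
    (htight : ∀ i, (Λ *ᵥ x) i = 1 → (Λ *ᵥ d) i = 0) :
    ∀ᶠ η in 𝓝 (0 : ℝ), InPoly n Λ (x + η • d) := by
  simp only [inPoly_iff, mulVec_add, mulVec_smul, Pi.add_apply, Pi.smul_apply, smul_eq_mul,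
    eventually_and, eventually_all]
  exact ⟨fun j => eventually_le_add_mul (hx.1 j) (hsupp j),
    fun i => eventually_le_add_mul (hx.2 i) (htight i)⟩

theorem ExtremePt.direction_eq_zero (hx : ExtremePt n Λ x) (hsupp : ∀ j, x j = 0 → d j = 0)
    (htight : ∀ i, (Λ *ᵥ x) i = 1 → (Λ *ᵥ d) i = 0) : d = 0 := by
  by_contra hd
  have hplus := hx.1.eventually_add_smul hsupp htight
  have hminus : ∀ᶠ η in 𝓝 (0 : ℝ), InPoly n Λ (x + (-η) • d) :=
    (continuous_neg.tendsto' (0 : ℝ) 0 neg_zero).eventually hplus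
  obtain ⟨η, ⟨hy, hz⟩, hη⟩ :=
    (((hplus.and hminus).filter_mono nhdsWithin_le_nhds).and self_mem_nhdsWithin).exists
      (f := 𝓝[>] (0 : ℝ))
  refine hx.2 ⟨_, _, hy, hz, fun h => hd ?_, ?_⟩
  · have h2 : (2 * η) • d = 0 := by
      rw [two_mul, add_smul, ← sub_eq_zero.2 (add_left_cancel h), neg_smul, sub_neg_eq_add]
    exact (smul_eq_zero.1 h2).resolve_left (by positivity)
  · funext j
    simp only [Pi.add_apply, Pi.smul_apply, smul_eq_mul]
    ring

end Polyhedron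

section Equilibrium

variable {n : ℕ} {Λ : Matrix (Fin (n+1)) (Fin (n+2)) ℝ} {μ : Fin (n+2) → ℝ}

theorem lpObj_eq (β : Fin (n+2) → ℝ) :
    lpObj n Λ μ β = univ.inf' univ_nonempty (Λ *ᵥ β) - μ ⬝ᵥ β := rfl

theorem IsMaxOn.mulVec_le {β : Fin (n+2) → ℝ} (hβ : β ∈ stdSimplex ℝ (Fin (n+2)))
    (hmax : IsMaxOn (lpObj n Λ μ) (stdSimplex ℝ (Fin (n+2))) β) {j : Fin (n+1)}
    (hcol : ∀ i ≠ j, Λ i j.castSucc = Λ i j.succ) (hμ : μ j.succ < μ j.castSucc)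
    (hpos : 0 < β j.castSucc) (i : Fin (n+1)) : (Λ *ᵥ β) j ≤ (Λ *ᵥ β) i := by
  by_contra! hlt
  set e : Fin (n+2) → ℝ := Pi.single j.succ 1 - Pi.single j.castSucc 1
  have hne : j.castSucc ≠ j.succ := (Fin.castSucc_lt_succ (i := j)).ne
  have hcolumn : ∀ k, (Λ *ᵥ e) k = Λ k j.succ - Λ k j.castSucc := by
    simp [e, mulVec_sub]
  obtain ⟨δ, ⟨hδβ, hrow⟩, hδ⟩ :=
    ((((eventually_lt_nhds hpos).and (eventually_le_add_mul (c := (Λ *ᵥ e) j) hlt.le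
      fun h => absurd h hlt.ne')).filter_mono nhdsWithin_le_nhds).and
      self_mem_nhdsWithin).exists (f := 𝓝[>] (0 : ℝ))
  have hmem : β + δ • e ∈ stdSimplex ℝ (Fin (n+2)) := by
    refine ⟨fun k => ?_, ?_⟩
    · have := hβ.1 k
      by_cases hk : k = j.castSucc
      · subst hk; simp [e, hne]; linarith
      · by_cases hk' : k = j.succ
        · subst hk'; simp [e, hne.symm]; linarith
        · simpa [e, hk, hk'] using this
    · simp [e, sum_add_distrib, ← mul_sum, sum_sub_distrib, hβ.2]
  have hinf : univ.inf' univ_nonempty (Λ *ᵥ β) ≤ univ.inf' univ_nonempty (Λ *ᵥ (β + δ • e)) := by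
    refine le_inf' _ _ fun k _ => ?_
    rw [mulVec_add, mulVec_smul, Pi.add_apply, Pi.smul_apply, smul_eq_mul, hcolumn]
    by_cases hk : k = j
    · subst hk
      exact (inf'_le _ (mem_univ i)).trans (by rwa [← hcolumn])
    · rw [hcol k hk, sub_self, mul_zero, add_zero]
      exact inf'_le _ (mem_univ k)
  have hcost : μ ⬝ᵥ (β + δ • e) = μ ⬝ᵥ β - δ * (μ j.castSucc - μ j.succ) := by
    simp [e, dotProduct_add, dotProduct_smul, dotProduct_sub, dotProduct_single]
    ring
  have := isMaxOn_iff.1 hmax _ hmem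
  rw [lpObj_eq, lpObj_eq, hcost] at this
  have hgain := mul_pos hδ (sub_pos.2 hμ)
  linarith

def RowsMinimalOnSupport {n : ℕ} (A : Matrix (Fin (n+1)) (Fin (n+2)) ℝ) (x : Fin (n+2) → ℝ) :
    Prop :=
  ∀ i : Fin (n+1), 0 < x i.castSucc → ∀ k, (A *ᵥ x) i ≤ (A *ᵥ x) k

theorem CorrespondsToEq.rowsMinimalOnSupport {x : Fin (n+2) → ℝ}
    (heq : CorrespondsToEq n Λ μ x) (hx : ∀ j, 0 ≤ x j)
    (hcol : ∀ i j : Fin (n+1), i ≠ j → Λ i j.castSucc = Λ i j.succ)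
    (hμ : ∀ j : Fin (n+1), μ j.succ < μ j.castSucc) : RowsMinimalOnSupport Λ x := by
  intro j hpos i
  obtain ⟨hS, hopt⟩ := heq
  have hβ : (fun j => x j / ∑ j', x j') = (∑ j', x j')⁻¹ • x := by
    funext j; simp [div_eq_inv_mul]
  have hmem : (∑ j', x j')⁻¹ • x ∈ stdSimplex ℝ (Fin (n+2)) :=
    ⟨fun j => by simpa using mul_nonneg (inv_nonneg.2 hS.le) (hx j),
      by simp [← mul_sum, inv_mul_cancel₀ hS.ne']⟩
  have hmax : IsMaxOn (lpObj n Λ μ) (stdSimplex ℝ (Fin (n+2))) ((∑ j', x j')⁻¹ • x) :=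
    isMaxOn_iff.2 fun β hβ' => hβ ▸ hopt β hβ'.1 hβ'.2
  have := hmax.mulVec_le hmem (fun k hk => hcol k j hk) (hμ j)
    (by simpa using mul_pos (inv_pos.2 hS) hpos) i
  simpa [mulVec_smul, inv_pos, hS] using this

end Equilibrium

def gameMatrix (n : ℕ) (r : Fin (n+1) → ℝ) (cd C : ℝ) : Matrix (Fin (n+1)) (Fin (n+2)) ℝ :=
  fun i j => cd * (if (j : ℕ) ≤ (i : ℕ) then 1 else 0) - r i + C

section GameMatrix

variable {n : ℕ} {r : Fin (n+1) → ℝ} {cd C : ℝ} {x : Fin (n+2) → ℝ}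

theorem gameMatrix_castSucc_eq_succ {i j : Fin (n+1)} (h : i ≠ j) :
    gameMatrix n r cd C i j.castSucc = gameMatrix n r cd C i j.succ := by
  have : (j : ℕ) ≤ i ↔ (j : ℕ) + 1 ≤ i := by have := Fin.val_ne_of_ne h; omega
  simp [gameMatrix, this]

theorem gameMatrix_mulVec_succ_sub (v : Fin (n+2) → ℝ) {k : ℕ} (hk : k + 1 ≤ n) :
    (gameMatrix n r cd C *ᵥ v) ⟨k + 1, by omega⟩ - (gameMatrix n r cd C *ᵥ v) ⟨k, by omega⟩ =
      cd * v ⟨k + 1, by omega⟩ - (r ⟨k + 1, by omega⟩ - r ⟨k, by omega⟩) * ∑ j, v j := by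
  have hterm : ∀ j : Fin (n+2),
      gameMatrix n r cd C ⟨k + 1, by omega⟩ j * v j - gameMatrix n r cd C ⟨k, by omega⟩ j * v j =
        (if j = ⟨k + 1, by omega⟩ then cd * v j else 0)
          - (r ⟨k + 1, by omega⟩ - r ⟨k, by omega⟩) * v j := by
    intro j
    simp only [gameMatrix, Fin.ext_iff]
    split_ifs <;> first | omega | ring
  simp only [mulVec, dotProduct, ← sum_sub_distrib, hterm]
  rw [sum_sub_distrib, sum_ite_eq', if_pos (mem_univ _), mul_sum]

theorem gameMatrix_mulVec_of_forall_eq_zero {v : Fin (n+2) → ℝ} {i : Fin (n+1)}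
    (hv : ∀ j : Fin (n+2), (j : ℕ) ≤ i → v j = 0) :
    (gameMatrix n r cd C *ᵥ v) i = (C - r i) * ∑ j, v j := by
  simp only [mulVec, dotProduct, mul_sum]
  refine sum_congr rfl fun j _ => ?_
  by_cases hj : (j : ℕ) ≤ i
  · simp [hv j hj]
  · simp only [gameMatrix, hj, if_false]; ring

theorem gameMatrix_mulVec_single_sub_single_last {t : ℕ} {i : Fin (n+1)} (h : t ≤ i) :
    (gameMatrix n r cd C *ᵥ
      (Pi.single (⟨t, by omega⟩ : Fin (n+2)) 1 - Pi.single (Fin.last (n+1)) 1)) i = cd := by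
  have hlast : ¬ n + 1 ≤ (i : ℕ) := by omega
  simp [mulVec_sub, gameMatrix, h, hlast]

theorem pos_succ_of_gameMatrix_mulVec_le (hcd : 0 < cd) (hr : StrictMono r)
    (hS : 0 < ∑ j, x j) {k : ℕ} (hk : k + 1 ≤ n)
    (h : (gameMatrix n r cd C *ᵥ x) ⟨k, by omega⟩ ≤
      (gameMatrix n r cd C *ᵥ x) ⟨k + 1, by omega⟩) :
    0 < x ⟨k + 1, by omega⟩ := by
  have hdiff := gameMatrix_mulVec_succ_sub (r := r) (cd := cd) (C := C) x hk
  have hrk : 0 < r ⟨k + 1, by omega⟩ - r ⟨k, by omega⟩ :=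
    sub_pos.2 (hr (Fin.mk_lt_mk.2 k.lt_succ_self))
  have : 0 < cd * x ⟨k + 1, by omega⟩ := by nlinarith
  exact pos_of_mul_pos_right this hcd.le

theorem eq_of_gameMatrix_mulVec_eq (hcd : cd ≠ 0) {k : ℕ} (hk : k + 1 ≤ n)
    (h : (gameMatrix n r cd C *ᵥ x) ⟨k + 1, by omega⟩ =
      (gameMatrix n r cd C *ᵥ x) ⟨k, by omega⟩) :
    x ⟨k + 1, by omega⟩ = (r ⟨k + 1, by omega⟩ - r ⟨k, by omega⟩) / cd * ∑ j, x j := by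
  have hdiff := gameMatrix_mulVec_succ_sub (r := r) (cd := cd) (C := C) x hk
  field_simp
  linarith

theorem RowsMinimalOnSupport.pos_of_le (hmin : RowsMinimalOnSupport (gameMatrix n r cd C) x)
    (hcd : 0 < cd) (hr : StrictMono r) (hS : 0 < ∑ j, x j) {t k : ℕ} (htk : t ≤ k)
    (hk : k < n + 1) (ht : 0 < x ⟨t, by omega⟩) : 0 < x ⟨k, by omega⟩ := by
  induction k, htk using Nat.le_induction with
  | base => exact ht
  | succ k htk ih =>
    exact pos_succ_of_gameMatrix_mulVec_le hcd hr hS (by omega)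
      (hmin ⟨k, by omega⟩ (ih (by omega) ht) _)

theorem RowsMinimalOnSupport.gameMatrix_mulVec_eq_of_le
    (hmin : RowsMinimalOnSupport (gameMatrix n r cd C) x) (hcd : 0 < cd) (hr : StrictMono r)
    (hS : 0 < ∑ j, x j) {t : ℕ} (htn : t < n + 1) (ht : 0 < x ⟨t, by omega⟩) {i : Fin (n+1)}
    (hti : t ≤ i) :
    (gameMatrix n r cd C *ᵥ x) i = (gameMatrix n r cd C *ᵥ x) ⟨t, htn⟩ :=
  le_antisymm (hmin i (hmin.pos_of_le hcd hr hS hti i.isLt ht) _) (hmin ⟨t, htn⟩ ht i)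

theorem RowsMinimalOnSupport.eq_and_pos_of_lt
    (hmin : RowsMinimalOnSupport (gameMatrix n r cd C) x) (hcd : 0 < cd) (hr : StrictMono r)
    (hS : 0 < ∑ j, x j) {t : ℕ} (htn : t < n + 1) (ht : 0 < x ⟨t, by omega⟩) {i : ℕ}
    (hti : t < i) (hin : i < n + 1) :
    x ⟨i, by omega⟩ = (r ⟨i, hin⟩ - r ⟨i - 1, by omega⟩) / cd * ∑ j, x j ∧
      0 < x ⟨i, by omega⟩ := by
  obtain ⟨k, rfl⟩ : ∃ k, i = k + 1 := ⟨i - 1, by omega⟩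
  refine ⟨eq_of_gameMatrix_mulVec_eq (C := C) hcd.ne' (by omega) ?_,
    hmin.pos_of_le hcd hr hS hti.le hin ht⟩
  rw [hmin.gameMatrix_mulVec_eq_of_le hcd hr hS htn ht (i := ⟨k + 1, by omega⟩) (by simp; omega),
    hmin.gameMatrix_mulVec_eq_of_le hcd hr hS htn ht (i := ⟨k, by omega⟩) (by simp; omega)]

theorem gameMatrix_mulVec_le_of_le_of_lt (hr : StrictMono r) (hS : 0 ≤ ∑ j, x j) {t : ℕ}
    (hzero : ∀ j : Fin (n+2), (j : ℕ) < t → x j = 0) {i k : Fin (n+1)} (hik : i ≤ k)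
    (hkt : (k : ℕ) < t) : (gameMatrix n r cd C *ᵥ x) k ≤ (gameMatrix n r cd C *ᵥ x) i := by
  rw [gameMatrix_mulVec_of_forall_eq_zero fun j hj => hzero j (by omega),
    gameMatrix_mulVec_of_forall_eq_zero fun j hj => hzero j (by omega)]
  have := hr.monotone hik
  nlinarith

theorem exists_succ_eq_gameMatrix_mulVec_eq_one
    (hmin : RowsMinimalOnSupport (gameMatrix n r cd C) x) (hcd : 0 < cd) (hr : StrictMono r)
    (hS : 0 < ∑ j, x j) (hx : ExtremePt n (gameMatrix n r cd C) x) {t : ℕ} (htn : t < n + 1)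
    (hzero : ∀ j : Fin (n+2), (j : ℕ) < t → x j = 0) (ht : 0 < x ⟨t, by omega⟩)
    (hlast : 0 < x (Fin.last (n+1))) :
    ∃ s, ∃ hs : s + 1 = t, (gameMatrix n r cd C *ᵥ x) ⟨s, by omega⟩ = 1 := by
  by_contra! hslack
  set M := gameMatrix n r cd C
  have hlow : ∀ i : Fin (n+1), (i : ℕ) < t → 1 < (M *ᵥ x) i := fun i hi =>
    ((hx.1.2 _).lt_of_ne (hslack (t - 1) (by omega)).symm).trans_le
      (gameMatrix_mulVec_le_of_le_of_lt hr hS.le hzero (k := ⟨t - 1, by omega⟩)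
        (Fin.mk_le_mk.2 (by omega)) (by simp; omega))
  have hpos : ∀ j : Fin (n+2), t ≤ j → 0 < x j := by
    intro j hj
    by_cases hjn : (j : ℕ) ≤ n
    · exact hmin.pos_of_le hcd hr hS hj (by omega) ht
    · rwa [show j = Fin.last (n+1) from Fin.ext (by simp; omega)]
  set ρ := (M *ᵥ x) ⟨t, htn⟩
  set e : Fin (n+2) → ℝ := Pi.single ⟨t, by omega⟩ 1 - Pi.single (Fin.last (n+1)) 1
  have hd := hx.direction_eq_zero (d := cd • x - ρ • e) (fun j hj => ?_) (fun i hi => ?_)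
  · have hlast' := congrFun hd (Fin.last (n+1))
    have hne : Fin.last (n+1) ≠ ⟨t, by omega⟩ := by simp [Fin.ext_iff]; omega
    simp [e, hne] at hlast'
    have hρ : 1 ≤ ρ := hx.1.2 _
    nlinarith
  · have hjt : (j : ℕ) < t := by
      by_contra h
      exact (hpos j (by omega)).ne' hj
    have h1 : j ≠ ⟨t, by omega⟩ := by simp [Fin.ext_iff]; omega
    have h2 : j ≠ Fin.last (n+1) := by simp [Fin.ext_iff]; omega
    simp [e, hj, h1, h2]
  · have hti : t ≤ (i : ℕ) := by
      by_contra h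
      exact (hlow i (by omega)).ne' hi
    rw [mulVec_sub, mulVec_smul, mulVec_smul, Pi.sub_apply, Pi.smul_apply, Pi.smul_apply,
      gameMatrix_mulVec_single_sub_single_last hti,
      hmin.gameMatrix_mulVec_eq_of_le hcd hr hS htn ht hti, smul_eq_mul, smul_eq_mul, mul_comm,
      sub_self]

theorem exists_succ_eq_forall_eq_and_pos
    (hmin : RowsMinimalOnSupport (gameMatrix n r cd C) x) (hcd : 0 < cd) (hr : StrictMono r)
    (hS : 0 < ∑ j, x j) (hx : ExtremePt n (gameMatrix n r cd C) x) {t : ℕ} (htn : t < n + 2)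
    (hzero : ∀ j : Fin (n+2), (j : ℕ) < t → x j = 0) (ht : 0 < x ⟨t, htn⟩)
    (hlast : 0 < x (Fin.last (n+1))) :
    ∃ s, s + 1 = t ∧ ∀ i (hsi : s < i) (hin : i ≤ n),
      x ⟨i, by omega⟩ = (r ⟨i, by omega⟩ - r ⟨i - 1, by omega⟩) / cd * ∑ j, x j ∧
        0 < x ⟨i, by omega⟩ := by
  rcases Nat.lt_or_ge n t with htn' | htn'
  · exact ⟨n, by omega, fun i hsi hin => absurd hin (by omega)⟩
  obtain ⟨s, rfl, hs⟩ :=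
    exists_succ_eq_gameMatrix_mulVec_eq_one hmin hcd hr hS hx (by omega) hzero ht hlast
  refine ⟨s, rfl, fun i hsi hin => ?_⟩
  rcases (Nat.succ_le_of_lt hsi).eq_or_lt with rfl | hlt
  · have hrow : (gameMatrix n r cd C *ᵥ x) ⟨s + 1, by omega⟩ =
        (gameMatrix n r cd C *ᵥ x) ⟨s, by omega⟩ :=
      le_antisymm (hs ▸ hmin ⟨s + 1, by omega⟩ ht _) (hs ▸ hx.1.2 _)
    exact ⟨eq_of_gameMatrix_mulVec_eq hcd.ne' hin hrow, ht⟩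
  · exact hmin.eq_and_pos_of_lt hcd hr hS (by omega) ht hlt (by omega)

end GameMatrix

/-- any extreme point of the polyhedron corresponding to a defender
equilibrium strategy has the form: zeros before an index s, components
x_i = ((r_i − r_{i−1})/c_d)·‖x‖ > 0 for s+1 ≤ i ≤ m, and not both x_s > 0 and
x_{m+1} > 0. -/
theorem optimal_extreme_point_structure
    (n : ℕ) (r : Fin (n+1) → ℝ) (cd ε : ℝ)
    (hr : ∀ i j : Fin (n+1), i < j → r i < r j) (hcd : 0 < cd)
    (μ : Fin (n+2) → ℝ) (hμ : ∀ j : Fin (n+1), μ j.succ < μ j.castSucc)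
    (Λ : Fin (n+1) → Fin (n+2) → ℝ)
    (hΛ : ∀ i j, Λ i j =
      cd * (if (j : ℕ) ≤ (i : ℕ) then 1 else 0) - r i + (r (Fin.last n) + ε))
    (x : Fin (n+2) → ℝ) (hx : ExtremePt n Λ x)
    (heq : CorrespondsToEq n Λ μ x) :
    ∃ s : ℕ, ∃ hs : s ≤ n,
      (∀ j : Fin (n+2), (j : ℕ) < s → x j = 0) ∧
      (∀ i : ℕ, ∀ h1 : s < i, ∀ h2 : i ≤ n,
        x ⟨i, by omega⟩ = (r ⟨i, by omega⟩ - r ⟨i - 1, by omega⟩) / cd * ∑ j, x j ∧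
        0 < x ⟨i, by omega⟩) ∧
      ¬ (0 < x ⟨s, by omega⟩ ∧ 0 < x (Fin.last (n+1))) := by
  obtain rfl : Λ = gameMatrix n r cd (r (Fin.last n) + ε) := funext₂ hΛ
  have hS := heq.1
  have hmin := heq.rowsMinimalOnSupport hx.1.1 (fun _ _ => gameMatrix_castSucc_eq_succ) hμ
  obtain ⟨t, ht, hzero⟩ := exists_pos_forall_lt_eq_zero hx.1.1 hS
  rcases (hx.1.1 (Fin.last (n+1))).eq_or_lt with hlast | hlast
  · have htn : (t : ℕ) < n + 1 := by
      by_contra h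
      rw [show t = Fin.last (n+1) from Fin.ext (by simp; omega)] at ht
      exact ht.ne hlast
    exact ⟨t, by omega, hzero,
      fun i hti hin => hmin.eq_and_pos_of_lt hcd hr hS htn ht hti (by omega),
      fun h => h.2.ne hlast⟩
  · obtain ⟨s, hst, hform⟩ :=
      exists_succ_eq_forall_eq_and_pos hmin hcd hr hS hx t.isLt hzero ht hlast
    exact ⟨s, by omega, fun j hj => hzero j (by omega), hform,
      fun h => h.1.ne' (hzero _ (by simp; omega))⟩
end

section
/- In the reduced classification game, at most one extreme point of 'Type I' (with x_{m+1} = 0 and x_s > 0) of the defender's LP polyhedron corresponds to a Nash equilibrium strategy: if two Type I extreme points with distinct starting indices s_a < s_b both correspond to equilibrium strategies, the strict monotonicity of μ yields a contradiction. -/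
open Finset

/-- A 'Type I' point of the polyhedron with starting index s: x_{m+1} = 0,
x_s > 0, zeros before s, x_i = ((r_i − r_{i−1})/c_d)·‖x‖ for i > s, and all
inequality constraints from row s through row m tight. -/
def TypeIPt (n : ℕ) (Λ : Fin (n+1) → Fin (n+2) → ℝ) (r : Fin (n+1) → ℝ)
    (cd : ℝ) (x : Fin (n+2) → ℝ) (s : Fin (n+1)) : Prop :=
  x (Fin.last (n+1)) = 0 ∧
  0 < x s.castSucc ∧
  (∀ j : Fin (n+2), (j : ℕ) < (s : ℕ) → x j = 0) ∧
  (∀ i : ℕ, ∀ h1 : (s : ℕ) < i, ∀ h2 : i ≤ n,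
    x ⟨i, by omega⟩ = (r ⟨i, by omega⟩ - r ⟨i - 1, by omega⟩) / cd * ∑ j, x j ∧
    0 < x ⟨i, by omega⟩) ∧
  (∀ i : Fin (n+1), (s : ℕ) ≤ (i : ℕ) → ∑ j, Λ i j * x j = 1)

/-!
Both Type I points lie on the tight last row `(c_d + ε) ‖x‖ = 1` of the polyhedron, so they have
the same mass and their normalizations both achieve `min(Λβ) = c_d + ε`; the objective then
compares them through `μ'x` alone. They also agree beyond `s_b`, the point `y` vanishes below
`s_b`, and `x` puts positive mass at `s_a < s_b`: passing from `x` to `y` moves mass to larger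
indices, which strictly lowers `μ'x` because `μ` is strictly decreasing. Hence `y` strictly
beats `x`, and `x` cannot be an equilibrium.
-/

theorem sum_mul_lt_sum_mul_of_strictAnti {ι : Type*} [Fintype ι] [LinearOrder ι]
    {μ x y : ι → ℝ} (hμ : StrictAnti μ) (hsum : ∑ j, x j = ∑ j, y j) (hx : ∀ j, 0 ≤ x j)
    {t a : ι} (hy : ∀ j, j < t → y j = 0) (hxy : ∀ j, t < j → x j = y j) (hat : a < t)
    (ha : 0 < x a) : ∑ j, μ j * y j < ∑ j, μ j * x j := by
  have hterm : ∀ j, 0 ≤ (μ j - μ t) * (x j - y j) := by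
    intro j
    rcases lt_trichotomy j t with hj | rfl | hj
    · rw [hy j hj, sub_zero]
      exact mul_nonneg (sub_nonneg.mpr (hμ hj).le) (hx j)
    · simp
    · simp [hxy j hj]
  have hpos : 0 < ∑ j, (μ j - μ t) * (x j - y j) :=
    sum_pos' (fun j _ => hterm j)
      ⟨a, mem_univ a, by rw [hy a hat, sub_zero]; exact mul_pos (sub_pos.mpr (hμ hat)) ha⟩
  have hsplit : ∑ j, (μ j - μ t) * (x j - y j)
      = ∑ j, μ j * x j - ∑ j, μ j * y j - μ t * (∑ j, x j - ∑ j, y j) := by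
    simp only [mul_sum, ← sum_sub_distrib]
    exact sum_congr rfl fun j _ => by ring
  rw [hsplit, hsum, sub_self, mul_zero, sub_zero] at hpos
  linarith

section LPObjective

variable {n : ℕ} {Λ : Fin (n+1) → Fin (n+2) → ℝ} {μ z : Fin (n+2) → ℝ}

theorem lpObj_div_sum_le_of_row_eq_one {i₀ : Fin (n+1)} (hi₀ : ∑ j, Λ i₀ j * z j = 1) :
    lpObj n Λ μ (fun j => z j / ∑ j', z j') ≤ (1 - ∑ j, μ j * z j) / ∑ j, z j := by
  unfold lpObj
  simp only [← mul_div_assoc, ← sum_div, sub_div]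
  gcongr
  rw [← hi₀]
  exact inf'_le _ (mem_univ i₀)

theorem div_sum_le_lpObj_div_sum (hz : InPoly n Λ z) (hS : 0 < ∑ j, z j) :
    (1 - ∑ j, μ j * z j) / ∑ j, z j ≤ lpObj n Λ μ (fun j => z j / ∑ j', z j') := by
  unfold lpObj
  simp only [← mul_div_assoc, ← sum_div, sub_div]
  gcongr
  exact le_inf' _ _ fun i _ => div_le_div_of_nonneg_right (hz.2 i) hS.le

theorem CorrespondsToEq.sum_mul_le {x : Fin (n+2) → ℝ} (hx : CorrespondsToEq n Λ μ x)
    {i₀ : Fin (n+1)} (hi₀ : ∑ j, Λ i₀ j * x j = 1) (hz : InPoly n Λ z)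
    (hmass : ∑ j, z j = ∑ j, x j) : ∑ j, μ j * x j ≤ ∑ j, μ j * z j := by
  have hS : 0 < ∑ j, z j := hmass ▸ hx.1
  have hopt := hx.2 (fun j => z j / ∑ j', z j') (fun j => div_nonneg (hz.1 j) hS.le)
    (by rw [← sum_div, div_self hS.ne'])
  have key := ((div_sum_le_lpObj_div_sum (μ := μ) hz hS).trans hopt).trans
    (lpObj_div_sum_le_of_row_eq_one hi₀)
  rw [hmass, div_le_div_iff_of_pos_right hx.1] at key
  linarith

end LPObjective

section TypeI

variable {n : ℕ} {r : Fin (n+1) → ℝ} {cd ε : ℝ} {Λ : Fin (n+1) → Fin (n+2) → ℝ}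
  {z w : Fin (n+2) → ℝ} {s t : Fin (n+1)}

theorem sum_lastRow_mul_of_last_eq_zero
    (hΛ : ∀ i j, Λ i j =
      cd * (if (j : ℕ) ≤ (i : ℕ) then 1 else 0) - r i + (r (Fin.last n) + ε))
    (hz : z (Fin.last (n+1)) = 0) :
    ∑ j, Λ (Fin.last n) j * z j = (cd + ε) * ∑ j, z j := by
  rw [mul_sum]
  refine sum_congr rfl fun j _ => ?_
  cases j using Fin.lastCases with
  | last => rw [hz, mul_zero, mul_zero]
  | cast j =>
    rw [hΛ, if_pos (by simpa using j.is_le)]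
    ring

theorem TypeIPt.mul_sum_eq_one
    (hΛ : ∀ i j, Λ i j =
      cd * (if (j : ℕ) ≤ (i : ℕ) then 1 else 0) - r i + (r (Fin.last n) + ε))
    (hz : TypeIPt n Λ r cd z s) : (cd + ε) * ∑ j, z j = 1 := by
  rw [← sum_lastRow_mul_of_last_eq_zero hΛ hz.1]
  exact hz.2.2.2.2 (Fin.last n) s.is_le

theorem TypeIPt.eq_of_sum_eq (hz : TypeIPt n Λ r cd z s) (hw : TypeIPt n Λ r cd w t)
    (hmass : ∑ j, z j = ∑ j, w j) {j : Fin (n+2)} (hsj : (s : ℕ) < j) (htj : (t : ℕ) < j) :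
    z j = w j := by
  by_cases hjn : (j : ℕ) ≤ n
  · rw [(hz.2.2.2.1 j hsj hjn).1, (hw.2.2.2.1 j htj hjn).1, hmass]
  · obtain rfl : j = Fin.last (n+1) := Fin.ext (by simp; omega)
    rw [hz.1, hw.1]

end TypeI

theorem at_most_one_typeI_optimal_general
    (n : ℕ) (r : Fin (n+1) → ℝ) (cd ε : ℝ)
    (μ : Fin (n+2) → ℝ) (hμ : ∀ j : Fin (n+1), μ j.succ < μ j.castSucc)
    (Λ : Fin (n+1) → Fin (n+2) → ℝ)
    (hΛ : ∀ i j, Λ i j =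
      cd * (if (j : ℕ) ≤ (i : ℕ) then 1 else 0) - r i + (r (Fin.last n) + ε))
    (x y : Fin (n+2) → ℝ) (hx : InPoly n Λ x) (hy : InPoly n Λ y)
    (sa sb : Fin (n+1)) (hab : sa < sb)
    (hxI : TypeIPt n Λ r cd x sa) (hyI : TypeIPt n Λ r cd y sb)
    (hxeq : CorrespondsToEq n Λ μ x) :
    False := by
  have hx1 := hxI.mul_sum_eq_one hΛ
  have hmass : ∑ j, x j = ∑ j, y j :=
    mul_left_cancel₀ (left_ne_zero_of_mul_eq_one hx1) (hx1.trans (hyI.mul_sum_eq_one hΛ).symm)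
  have hle : ∑ j, μ j * x j ≤ ∑ j, μ j * y j :=
    hxeq.sum_mul_le (hxI.2.2.2.2 (Fin.last n) sa.is_le) hy hmass.symm
  have hlt : ∑ j, μ j * y j < ∑ j, μ j * x j :=
    sum_mul_lt_sum_mul_of_strictAnti (Fin.strictAnti_iff_succ_lt.mpr hμ) hmass hx.1
      (t := sb.castSucc) hyI.2.2.1
      (fun j hj => hxI.eq_of_sum_eq hyI hmass (lt_trans hab hj) hj)
      (Fin.castSucc_lt_castSucc_iff.mpr hab) hxI.2.1
  exact hle.not_gt hlt

/-- at most one Type I extreme point corresponds to an equilibrium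
strategy: two Type I points with distinct starting indices s_a < s_b cannot both
correspond to defender Nash equilibrium strategies. -/
theorem at_most_one_typeI_optimal
    (n : ℕ) (r : Fin (n+1) → ℝ) (cd ε : ℝ)
    (hr : ∀ i j : Fin (n+1), i < j → r i < r j) (hcd : 0 < cd) (hε : 0 < ε)
    (μ : Fin (n+2) → ℝ) (hμ : ∀ j : Fin (n+1), μ j.succ < μ j.castSucc)
    (Λ : Fin (n+1) → Fin (n+2) → ℝ)
    (hΛ : ∀ i j, Λ i j =
      cd * (if (j : ℕ) ≤ (i : ℕ) then 1 else 0) - r i + (r (Fin.last n) + ε))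
    (x y : Fin (n+2) → ℝ) (hx : InPoly n Λ x) (hy : InPoly n Λ y)
    (sa sb : Fin (n+1)) (hab : sa < sb)
    (hxI : TypeIPt n Λ r cd x sa) (hyI : TypeIPt n Λ r cd y sb)
    (hxeq : CorrespondsToEq n Λ μ x) (hyeq : CorrespondsToEq n Λ μ y) :
    False :=
  at_most_one_typeI_optimal_general n r cd ε μ hμ Λ hΛ x y hx hy sa sb hab hxI hyI hxeq
end

section
/- In the reduced classification game, if the defender's unique equilibrium strategy β has β_k > 0, β_{k+1} > 0 for two consecutive reward indices k, k+1 (so both threshold classifiers c_k and c_{k+1} are in the support), then in equilibrium the attacker places weight α_k = (μ_k − μ_{k+1})/c_d on reward r_k. -/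
open Finset

/-- Reduced game, attacker's expected payoff: the attacker picks reward index
i ∈ {0,…,n}, the defender a threshold index j ∈ {0,…,n+1}; threshold j detects
reward i iff i ≥ j (threshold n+1 never detects). -/
noncomputable def UAred (n : ℕ) (r : Fin (n+1) → ℝ) (cd : ℝ)
    (α : Fin (n+1) → ℝ) (β : Fin (n+2) → ℝ) : ℝ :=
  ∑ i : Fin (n+1), ∑ j : Fin (n+2), α i * (r i - cd * (if (j : ℕ) ≤ (i : ℕ) then 1 else 0)) * β j

/-- Reduced game, defender's expected payoff: minus attacker payoff minus the
false alarm penalty μ_j of threshold j. -/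
noncomputable def UDred (n : ℕ) (r : Fin (n+1) → ℝ) (cd : ℝ) (μ : Fin (n+2) → ℝ)
    (α : Fin (n+1) → ℝ) (β : Fin (n+2) → ℝ) : ℝ :=
  ∑ i : Fin (n+1), ∑ j : Fin (n+2), α i * (-(r i - cd * (if (j : ℕ) ≤ (i : ℕ) then 1 else 0)) - μ j) * β j

/-- Nash equilibrium of the reduced classification game. -/
def IsNashRed (n : ℕ) (r : Fin (n+1) → ℝ) (cd : ℝ) (μ : Fin (n+2) → ℝ)
    (α : Fin (n+1) → ℝ) (β : Fin (n+2) → ℝ) : Prop :=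
  IsProb α ∧ IsProb β ∧
  (∀ α', IsProb α' → UAred n r cd α' β ≤ UAred n r cd α β) ∧
  (∀ β', IsProb β' → UDred n r cd μ α β' ≤ UDred n r cd μ α β)

/-- Detection probability of reward index i under defender strategy β:
π_d(i) = Σ_{j ≤ i} β_j. -/
noncomputable def pidRed (n : ℕ) (β : Fin (n+2) → ℝ) (i : Fin (n+1)) : ℝ :=
  ∑ j ∈ Finset.univ.filter (fun j : Fin (n+2) => (j : ℕ) ≤ (i : ℕ)), β j

/-!
At an equilibrium the defender is indifferent between all thresholds in the support of `β`
(a mixed best response to a linear payoff only uses maximal pure strategies). The thresholds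
`c_k` and `c_{k+1}` classify the rewards identically except `r_k`, so their payoffs against `α`
differ by `c_d α_k - (μ_k - μ_{k+1})`, which must therefore vanish.
-/

noncomputable def thresholdPayoff (n : ℕ) (r : Fin (n+1) → ℝ) (cd : ℝ) (μ : Fin (n+2) → ℝ)
    (α : Fin (n+1) → ℝ) (j : Fin (n+2)) : ℝ :=
  ∑ i : Fin (n+1), α i * (-(r i - cd * (if (j : ℕ) ≤ (i : ℕ) then 1 else 0)) - μ j)

lemma UDred_eq_sum_thresholdPayoff (n : ℕ) (r : Fin (n+1) → ℝ) (cd : ℝ) (μ : Fin (n+2) → ℝ)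
    (α : Fin (n+1) → ℝ) (β : Fin (n+2) → ℝ) :
    UDred n r cd μ α β = ∑ j, thresholdPayoff n r cd μ α j * β j := by
  rw [UDred, sum_comm]
  exact sum_congr rfl fun j _ => (sum_mul _ _ _).symm

section Simplex

variable {ι : Type*} [Fintype ι] [DecidableEq ι]

lemma IsProb.add_smul_single_sub_single {β : ι → ℝ} (hβ : IsProb β) (a b : ι) :
    IsProb (β + β a • (Pi.single b 1 - Pi.single a 1)) := by
  refine ⟨fun j => ?_, ?_⟩
  · have hj := hβ.1 j
    have ha := hβ.1 a
    rcases eq_or_ne j a with rfl | hja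
    · rcases eq_or_ne j b with rfl | hjb <;> simp [*]
    · rcases eq_or_ne j b with rfl | hjb
      · simpa [hja] using add_nonneg hj ha
      · simpa [hja, hjb] using hj
  · simp [sum_add_distrib, ← mul_sum, sum_sub_distrib, hβ.2]

lemma IsProb.le_of_isMaxOn_of_pos {g β : ι → ℝ} (hβ : IsProb β)
    (hmax : IsMaxOn (fun β' => ∑ j, g j * β' j) {β' | IsProb β'} β)
    {a : ι} (ha : 0 < β a) (b : ι) : g b ≤ g a := by
  have hshift := hmax (hβ.add_smul_single_sub_single a b)
  have hgain : ∑ j, g j * (β + β a • (Pi.single b 1 - Pi.single a 1) : ι → ℝ) j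
      = ∑ j, g j * β j + β a * (g b - g a) := by
    simp only [Pi.add_apply, Pi.smul_apply, Pi.sub_apply, Pi.single_apply, smul_eq_mul, mul_add,
      mul_sub, mul_ite, mul_one, mul_zero, sum_add_distrib, sum_sub_distrib, sum_ite_eq', mem_univ,
      if_true]
    ring
  simp only [Set.mem_ofPred_eq, hgain] at hshift
  nlinarith

lemma IsProb.eq_of_isMaxOn_of_pos {g β : ι → ℝ} (hβ : IsProb β)
    (hmax : IsMaxOn (fun β' => ∑ j, g j * β' j) {β' | IsProb β'} β)
    {a b : ι} (ha : 0 < β a) (hb : 0 < β b) : g a = g b :=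
  le_antisymm (hβ.le_of_isMaxOn_of_pos hmax hb a) (hβ.le_of_isMaxOn_of_pos hmax ha b)

end Simplex

lemma ite_le_sub_ite_succ_le (k i : ℕ) :
    ((if k ≤ i then 1 else 0) - if k + 1 ≤ i then 1 else 0 : ℝ) = if i = k then 1 else 0 := by
  split_ifs <;> (try norm_num) <;> omega

lemma thresholdPayoff_castSucc_sub_succ (n : ℕ) (r : Fin (n+1) → ℝ) (cd : ℝ)
    (μ : Fin (n+2) → ℝ) {α : Fin (n+1) → ℝ} (hα : ∑ i, α i = 1) (k : Fin (n+1)) :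
    thresholdPayoff n r cd μ α k.castSucc - thresholdPayoff n r cd μ α k.succ
      = cd * α k - (μ k.castSucc - μ k.succ) := by
  have hterm : ∀ i : Fin (n+1),
      α i * (-(r i - cd * (if (k : ℕ) ≤ i then 1 else 0)) - μ k.castSucc)
        - α i * (-(r i - cd * (if (k : ℕ) + 1 ≤ i then 1 else 0)) - μ k.succ)
      = cd * (if i = k then α i else 0) - α i * (μ k.castSucc - μ k.succ) := by
    intro i
    have := ite_le_sub_ite_succ_le k i
    simp only [Fin.val_inj] at this
    split_ifs at this ⊢ <;> linarith
  simp only [thresholdPayoff, Fin.val_castSucc, Fin.val_succ]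
  rw [← sum_sub_distrib]
  simp only [hterm, sum_sub_distrib, ← mul_sum, ← sum_mul,
    sum_ite_eq', mem_univ, if_true, hα, one_mul]

theorem attacker_weight_from_consecutive_thresholds_general
    (n : ℕ) (r : Fin (n+1) → ℝ) (cd : ℝ)
    (hcd : 0 < cd)
    (μ : Fin (n+2) → ℝ)
    (α : Fin (n+1) → ℝ) (β : Fin (n+2) → ℝ)
    (hne : IsNashRed n r cd μ α β)
    (k : Fin (n+1)) (hk1 : 0 < β k.castSucc) (hk2 : 0 < β k.succ) :
    α k = (μ k.castSucc - μ k.succ) / cd := by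
  obtain ⟨hα, hβ, -, hβopt⟩ := hne
  have hindiff : thresholdPayoff n r cd μ α k.castSucc = thresholdPayoff n r cd μ α k.succ :=
    hβ.eq_of_isMaxOn_of_pos (isMaxOn_iff.mpr fun β' hβ' => by
      simpa only [UDred_eq_sum_thresholdPayoff] using hβopt β' hβ') hk1 hk2
  have hdiff := thresholdPayoff_castSucc_sub_succ n r cd μ hα.2 k
  rw [eq_div_iff hcd.ne']
  linarith

/-- if the defender's equilibrium strategy puts positive weight on
two consecutive threshold classifiers c_k and c_{k+1}, then the attacker places
weight α_k = (μ_k − μ_{k+1})/c_d on reward r_k. -/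
theorem attacker_weight_from_consecutive_thresholds
    (n : ℕ) (r : Fin (n+1) → ℝ) (cd cfa p : ℝ) (PN : Fin (n+1) → ℝ)
    (hr : ∀ i j : Fin (n+1), i < j → r i < r j)
    (hcd : 0 < cd) (hcfa : 0 < cfa) (hp : 0 < p) (hp1 : p < 1)
    (hPN : ∀ i, 0 < PN i) (hPN1 : ∑ i, PN i = 1)
    (μ : Fin (n+2) → ℝ)
    (hμ : ∀ j : Fin (n+2), μ j = (1 - p) / p * cfa *
      ∑ ℓ ∈ Finset.univ.filter (fun ℓ : Fin (n+1) => (j : ℕ) ≤ (ℓ : ℕ)), PN ℓ)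
    (α : Fin (n+1) → ℝ) (β : Fin (n+2) → ℝ)
    (hne : IsNashRed n r cd μ α β)
    (k : Fin (n+1)) (hk1 : 0 < β k.castSucc) (hk2 : 0 < β k.succ) :
    α k = (μ k.castSucc - μ k.succ) / cd :=
  attacker_weight_from_consecutive_thresholds_general n r cd hcd μ α β hne k hk1 hk2
end

section
/- If (α, β) is a Nash equilibrium of the threshold-classifier game G^T in which several attack vectors may share the same reward, then (α*, β) is a Nash equilibrium of the reduced game G^{R,T} on distinct reward values, with the same equilibrium payoff pair, where α*_r = Σ_{v : R(v) = r} α_v. -/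
open Finset

/-- A probability distribution supported on the finite set `S ⊆ ℝ`. -/
def IsProbOn (S : Finset ℝ) (μ : ℝ → ℝ) : Prop :=
  (∀ x ∈ S, 0 ≤ μ x) ∧ ∑ x ∈ S, μ x = 1

/-- G^T: attacker's expected payoff. The attacker picks v ∈ V, the defender a
threshold t (classifying v as attacker iff R(v) ≥ θ t). -/
noncomputable def UAT {V T : Type*} [Fintype V] [Fintype T]
    (R : V → ℝ) (θ : T → ℝ) (cd : ℝ) (α : V → ℝ) (β : T → ℝ) : ℝ :=
  ∑ v, ∑ t, α v * (R v - cd * (if θ t ≤ R v then 1 else 0)) * β t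

/-- G^T: defender's expected payoff. -/
noncomputable def UDT {V T : Type*} [Fintype V] [Fintype T]
    (R : V → ℝ) (θ : T → ℝ) (PN : V → ℝ) (cd cfa p : ℝ)
    (α : V → ℝ) (β : T → ℝ) : ℝ :=
  ∑ v, ∑ t, α v *
    (-(R v - cd * (if θ t ≤ R v then 1 else 0))
      - (1 - p) / p * cfa * ∑ v', PN v' * (if θ t ≤ R v' then 1 else 0)) * β t

/-- G^{R,T}: attacker's expected payoff when the attacker mixes over the set of
distinct reward values S = image of R. -/
noncomputable def UAR {T : Type*} [Fintype T] (S : Finset ℝ) (θ : T → ℝ) (cd : ℝ)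
    (α : ℝ → ℝ) (β : T → ℝ) : ℝ :=
  ∑ rr ∈ S, ∑ t, α rr * (rr - cd * (if θ t ≤ rr then 1 else 0)) * β t

/-- G^{R,T}: defender's expected payoff, with reduced non-attacker distribution
`PNR` on the reward values S. -/
noncomputable def UDR {T : Type*} [Fintype T] (S : Finset ℝ) (θ : T → ℝ)
    (PNR : ℝ → ℝ) (cd cfa p : ℝ) (α : ℝ → ℝ) (β : T → ℝ) : ℝ :=
  ∑ rr ∈ S, ∑ t, α rr *
    (-(rr - cd * (if θ t ≤ rr then 1 else 0))
      - (1 - p) / p * cfa * ∑ rr' ∈ S, PNR rr' * (if θ t ≤ rr' then 1 else 0)) * β t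

/-!
A threshold classifier decides identically on attack vectors of equal reward, so every payoff
depends on an attack vector only through its reward. Hence summing a mixed strategy over the
fibres of `R` preserves both payoffs, and conversely every reduced strategy lifts (spread
uniformly over each fibre) to a strategy of `G^T` with the same payoffs; the equilibrium
inequalities of `G^T` therefore transfer to `G^{R,T}`.
-/

section Fibers

variable {V ι : Type*} [Fintype V] [DecidableEq ι] (R : V → ι)

def fiberSum (μ : V → ℝ) (r : ι) : ℝ :=
  ∑ v ∈ univ.filter (fun v => R v = r), μ v

noncomputable def uniformLift (ν : ι → ℝ) (v : V) : ℝ :=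
  ν (R v) / #(univ.filter (fun w => R w = R v))

variable {R}

theorem sum_image_fiberSum (μ : V → ℝ) :
    ∑ r ∈ image R univ, fiberSum R μ r = ∑ v, μ v :=
  sum_fiberwise_of_maps_to (fun v _ => mem_image_of_mem R (mem_univ v)) μ

theorem sum_image_fiberSum_mul (μ : V → ℝ) (F : ι → ℝ) :
    ∑ r ∈ image R univ, fiberSum R μ r * F r = ∑ v, μ v * F (R v) := by
  rw [← sum_fiberwise_of_maps_to (fun v _ => mem_image_of_mem R (mem_univ v))
    (fun v => μ v * F (R v))]
  refine sum_congr rfl fun r _ => ?_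
  rw [fiberSum, sum_mul]
  exact sum_congr rfl fun v hv => by rw [(mem_filter.mp hv).2]

theorem fiberSum_uniformLift (ν : ι → ℝ) {r : ι} (hr : r ∈ image R univ) :
    fiberSum R (uniformLift R ν) r = ν r := by
  obtain ⟨v₀, -, rfl⟩ := mem_image.mp hr
  have hcard : (#(univ.filter (fun w => R w = R v₀)) : ℝ) ≠ 0 :=
    Nat.cast_ne_zero.mpr (card_ne_zero_of_mem (mem_filter.mpr ⟨mem_univ v₀, rfl⟩))
  have hconst : ∀ v ∈ univ.filter (fun w => R w = R v₀),
      uniformLift R ν v = ν (R v₀) / #(univ.filter (fun w => R w = R v₀)) := by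
    intro v hv
    rw [uniformLift, (mem_filter.mp hv).2]
  rw [fiberSum, sum_congr rfl hconst, sum_const, nsmul_eq_mul, mul_div_cancel₀ _ hcard]

end Fibers

section Probabilities

variable {V : Type*} [Fintype V] {R : V → ℝ}

theorem IsProb.isProbOn_fiberSum {μ : V → ℝ} (hμ : IsProb μ) :
    IsProbOn (image R univ) (fiberSum R μ) :=
  ⟨fun _ _ => sum_nonneg fun v _ => hμ.1 v, (sum_image_fiberSum μ).trans hμ.2⟩

theorem IsProbOn.isProb_uniformLift {ν : ℝ → ℝ} (hν : IsProbOn (image R univ) ν) :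
    IsProb (uniformLift R ν) := by
  refine ⟨fun v => div_nonneg (hν.1 _ (mem_image_of_mem R (mem_univ v))) (Nat.cast_nonneg _), ?_⟩
  rw [← sum_image_fiberSum (R := R), ← hν.2]
  exact sum_congr rfl fun r hr => fiberSum_uniformLift ν hr

end Probabilities

section Payoffs

variable {V T : Type*} [Fintype V] [Fintype T] (R : V → ℝ) (θ : T → ℝ)

theorem UAR_congr {S : Finset ℝ} {cd : ℝ} {ν₁ ν₂ : ℝ → ℝ} (h : ∀ r ∈ S, ν₁ r = ν₂ r)
    (β : T → ℝ) : UAR S θ cd ν₁ β = UAR S θ cd ν₂ β :=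
  sum_congr rfl fun r hr => by rw [h r hr]

theorem UAR_fiberSum (cd : ℝ) (μ : V → ℝ) (β : T → ℝ) :
    UAR (image R univ) θ cd (fiberSum R μ) β = UAT R θ cd μ β := by
  unfold UAR UAT
  simp_rw [mul_assoc, ← mul_sum]
  exact sum_image_fiberSum_mul μ fun r => ∑ t, (r - cd * (if θ t ≤ r then 1 else 0)) * β t

theorem UDR_fiberSum (PN : V → ℝ) (cd cfa p : ℝ) (μ : V → ℝ) (β : T → ℝ) :
    UDR (image R univ) θ (fiberSum R PN) cd cfa p (fiberSum R μ) β
      = UDT R θ PN cd cfa p μ β := by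
  have hPN : ∀ t, ∑ r ∈ image R univ, fiberSum R PN r * (if θ t ≤ r then 1 else 0)
      = ∑ v, PN v * (if θ t ≤ R v then 1 else 0) := fun t =>
    sum_image_fiberSum_mul PN fun r => if θ t ≤ r then 1 else 0
  let D : ℝ → ℝ := fun r => ∑ t, (-(r - cd * (if θ t ≤ r then 1 else 0))
    - (1 - p) / p * cfa * ∑ v, PN v * (if θ t ≤ R v then 1 else 0)) * β t
  calc UDR (image R univ) θ (fiberSum R PN) cd cfa p (fiberSum R μ) β
      = ∑ r ∈ image R univ, fiberSum R μ r * D r := by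
        refine sum_congr rfl fun r _ => ?_
        rw [mul_sum]
        exact sum_congr rfl fun t _ => by rw [hPN]; ring
    _ = ∑ v, μ v * D (R v) := sum_image_fiberSum_mul μ D
    _ = UDT R θ PN cd cfa p μ β := by
        refine sum_congr rfl fun v _ => ?_
        rw [mul_sum]
        exact sum_congr rfl fun t _ => by ring

end Payoffs

theorem reduced_game_equilibrium_general
    {V T : Type*} [Fintype V] [Fintype T]
    (R : V → ℝ) (θ : T → ℝ) (PN : V → ℝ) (cd cfa p : ℝ)
    (α : V → ℝ) (β : T → ℝ)
    (hαp : IsProb α)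
    (hA : ∀ α', IsProb α' → UAT R θ cd α' β ≤ UAT R θ cd α β)
    (hD : ∀ β', IsProb β' → UDT R θ PN cd cfa p α β' ≤ UDT R θ PN cd cfa p α β) :
    IsProbOn (Finset.image R Finset.univ)
      (fun rr => ∑ v ∈ Finset.univ.filter (fun v => R v = rr), α v) ∧
    (∀ α'', IsProbOn (Finset.image R Finset.univ) α'' →
      UAR (Finset.image R Finset.univ) θ cd α'' β ≤
      UAR (Finset.image R Finset.univ) θ cd
        (fun rr => ∑ v ∈ Finset.univ.filter (fun v => R v = rr), α v) β) ∧
    (∀ β', IsProb β' →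
      UDR (Finset.image R Finset.univ) θ
        (fun rr => ∑ v ∈ Finset.univ.filter (fun v => R v = rr), PN v) cd cfa p
        (fun rr => ∑ v ∈ Finset.univ.filter (fun v => R v = rr), α v) β' ≤
      UDR (Finset.image R Finset.univ) θ
        (fun rr => ∑ v ∈ Finset.univ.filter (fun v => R v = rr), PN v) cd cfa p
        (fun rr => ∑ v ∈ Finset.univ.filter (fun v => R v = rr), α v) β) ∧
    UAR (Finset.image R Finset.univ) θ cd
      (fun rr => ∑ v ∈ Finset.univ.filter (fun v => R v = rr), α v) β
      = UAT R θ cd α β ∧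
    UDR (Finset.image R Finset.univ) θ
      (fun rr => ∑ v ∈ Finset.univ.filter (fun v => R v = rr), PN v) cd cfa p
      (fun rr => ∑ v ∈ Finset.univ.filter (fun v => R v = rr), α v) β
      = UDT R θ PN cd cfa p α β := by
  refine ⟨hαp.isProbOn_fiberSum, fun α'' hα'' => ?_, fun β' hβ' => ?_,
    UAR_fiberSum R θ cd α β, UDR_fiberSum R θ PN cd cfa p α β⟩
  · calc UAR (image R univ) θ cd α'' β
        = UAR (image R univ) θ cd (fiberSum R (uniformLift R α'')) β :=
          UAR_congr θ (fun r hr => (fiberSum_uniformLift α'' hr).symm) β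
      _ = UAT R θ cd (uniformLift R α'') β := UAR_fiberSum R θ cd _ β
      _ ≤ UAT R θ cd α β := hA _ hα''.isProb_uniformLift
      _ = UAR (image R univ) θ cd (fiberSum R α) β := (UAR_fiberSum R θ cd α β).symm
  · exact (UDR_fiberSum R θ PN cd cfa p α β').trans_le
      ((hD β' hβ').trans_eq (UDR_fiberSum R θ PN cd cfa p α β).symm)

/-- if (α, β) is a Nash equilibrium of the threshold-classifier game
G^T, then the aggregated strategy α*_r = Σ_{v : R(v)=r} α_v together with β forms a
Nash equilibrium of the reduced game G^{R,T} on distinct reward values, with the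
same equilibrium payoff pair. -/
theorem reduced_game_equilibrium
    {V T : Type*} [Fintype V] [Fintype T] [DecidableEq V]
    (R : V → ℝ) (θ : T → ℝ) (PN : V → ℝ) (cd cfa p : ℝ)
    (hR : ∀ v, 0 ≤ R v) (hcd : 0 < cd) (hcfa : 0 < cfa) (hp : 0 < p) (hp1 : p < 1)
    (hPN0 : ∀ v, 0 ≤ PN v) (hPN1 : ∑ v, PN v = 1)
    (α : V → ℝ) (β : T → ℝ)
    (hαp : IsProb α) (hβp : IsProb β)
    (hA : ∀ α', IsProb α' → UAT R θ cd α' β ≤ UAT R θ cd α β)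
    (hD : ∀ β', IsProb β' → UDT R θ PN cd cfa p α β' ≤ UDT R θ PN cd cfa p α β) :
    IsProbOn (Finset.image R Finset.univ)
      (fun rr => ∑ v ∈ Finset.univ.filter (fun v => R v = rr), α v) ∧
    (∀ α'', IsProbOn (Finset.image R Finset.univ) α'' →
      UAR (Finset.image R Finset.univ) θ cd α'' β ≤
      UAR (Finset.image R Finset.univ) θ cd
        (fun rr => ∑ v ∈ Finset.univ.filter (fun v => R v = rr), α v) β) ∧
    (∀ β', IsProb β' →
      UDR (Finset.image R Finset.univ) θ
        (fun rr => ∑ v ∈ Finset.univ.filter (fun v => R v = rr), PN v) cd cfa p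
        (fun rr => ∑ v ∈ Finset.univ.filter (fun v => R v = rr), α v) β' ≤
      UDR (Finset.image R Finset.univ) θ
        (fun rr => ∑ v ∈ Finset.univ.filter (fun v => R v = rr), PN v) cd cfa p
        (fun rr => ∑ v ∈ Finset.univ.filter (fun v => R v = rr), α v) β) ∧
    UAR (Finset.image R Finset.univ) θ cd
      (fun rr => ∑ v ∈ Finset.univ.filter (fun v => R v = rr), α v) β
      = UAT R θ cd α β ∧
    UDR (Finset.image R Finset.univ) θ
      (fun rr => ∑ v ∈ Finset.univ.filter (fun v => R v = rr), PN v) cd cfa p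
      (fun rr => ∑ v ∈ Finset.univ.filter (fun v => R v = rr), α v) β
      = UDT R θ PN cd cfa p α β :=
  reduced_game_equilibrium_general R θ PN cd cfa p α β hαp hA hD
end
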